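/- The coefficients c_n defined by the product ∏_{n=1}^{6}(1 + ω^n t - ω^{2n} t^2 a - ω^{5n} t^5 a^3) = ∑_{k=0}^{30} c_k t^k (with ω = e^{2πi/7}) satisfy the recurrence c_n + c_{n-1} - a c_{n-2} - a^3 c_{n-5} = d_{n/7} if 7 | n and = 0 otherwise, where ∑_{k=0}^5 d_k s^k = ∏_{n=0}^{6}(1 + ω^n t - ω^{2n}t^2 a - ω^{5n}t^5 a^3) with s = t^7. -/

import Mathlib

/-! Let `P(t) = ∏_{j<7} f_j(t)` with `f_j(t) = 1 + ωʲ t - ω^{2j} t² a - ω^{5j} t⁵ a³`. Since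
`f_j(ω t) = f_{j+1}(t)` and `f_7 = f_0`, the substitution `t ↦ ω t` permutes the factors of `P`,
so `P(ω t) = P(t)` and only powers `t^{7k}` survive in `P`; these coefficients are the `d_k`.
On the other hand `P = (∑ c_k t^k) · f_0` with `f_0 = 1 + t - a t² - a³ t⁵`, whose `n`-th
coefficient is `c_n + c_{n-1} - a c_{n-2} - a³ c_{n-5}`. -/

open Polynomial Finset

/-- A primitive 7th root of unity `ω = e^{2πi/7}`. -/
noncomputable def ω7 : ℂ := Complex.exp (2 * Real.pi * Complex.I / 7)

/-- The factor `1 + ωⁿ t - ω^{2n} t² a - ω^{5n} t⁵ a³` as a polynomial in `t` with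
coefficients in `ℂ[a]`. -/
noncomputable def ramFactor (n : ℕ) : Polynomial (Polynomial ℂ) :=
  1 + Polynomial.C (Polynomial.C (ω7 ^ n)) * Polynomial.X
    - Polynomial.C (Polynomial.C (ω7 ^ (2 * n)) * Polynomial.X) * Polynomial.X ^ 2
    - Polynomial.C (Polynomial.C (ω7 ^ (5 * n)) * Polynomial.X ^ 3) * Polynomial.X ^ 5

/-- The coefficients `c_k` (extended by `0` for negative index) of the numerator product
`∏_{n=1}^{6} (1 + ωⁿ t - ω^{2n} t² a - ω^{5n} t⁵ a³) = ∑_{k=0}^{30} c_k t^k`. -/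
noncomputable def ramC (n : ℤ) : Polynomial ℂ :=
  if n < 0 then 0 else (∏ j ∈ Finset.Icc 1 6, ramFactor j).coeff n.toNat

/-- The coefficients `d_k` of the full product
`∏_{n=0}^{6} (1 + ωⁿ t - ω^{2n} t² a - ω^{5n} t⁵ a³) = ∑_{k=0}^{5} d_k t^{7k}`. -/
noncomputable def ramD (k : ℕ) : Polynomial ℂ :=
  (∏ j ∈ Finset.range 7, ramFactor j).coeff (7 * k)

namespace Polynomial

variable {R : Type*}

theorem prod_range_comp_eq_self [CommSemiring R] {f : ℕ → R[X]} {q : R[X]} {k : ℕ}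
    (hf : ∀ j, (f j).comp q = f (j + 1)) (hk : f k = f 0) :
    (∏ j ∈ range k, f j).comp q = ∏ j ∈ range k, f j := by
  rw [prod_comp]
  simp only [hf]
  cases k with
  | zero => rfl
  | succ m => rw [prod_range_succ, prod_range_succ' f, hk]

theorem coeff_eq_zero_of_comp_C_mul_X_eq_self [CommRing R] [IsDomain R] {ζ : R} {k n : ℕ}
    (hζ : IsPrimitiveRoot ζ k) {p : R[X]} (hp : p.comp (C ζ * X) = p) (hn : ¬ k ∣ n) :
    p.coeff n = 0 := by
  have hζn : ζ ^ n - 1 ≠ 0 := sub_ne_zero.mpr (mt (hζ.pow_eq_one_iff_dvd n).mp hn)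
  have h : p.coeff n * (ζ ^ n - 1) = 0 := by
    rw [mul_sub_one, sub_eq_zero, ← comp_C_mul_X_coeff, hp]
  exact (mul_eq_zero.mp h).resolve_right hζn

end Polynomial

theorem isPrimitiveRoot_ω7 : IsPrimitiveRoot ω7 7 :=
  Complex.isPrimitiveRoot_exp 7 (by norm_num)

theorem ramFactor_comp_C_mul_X (n : ℕ) :
    (ramFactor n).comp (C (C ω7) * X) = ramFactor (n + 1) := by
  simp only [ramFactor, add_comp, sub_comp, mul_comp, one_comp, C_comp, X_comp, pow_comp,
    mul_add, pow_add, pow_one, map_mul, map_pow]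
  ring

theorem ramFactor_seven : ramFactor 7 = ramFactor 0 := by
  have h : ∀ m, ω7 ^ (m * 7) = 1 := fun m => by
    rw [mul_comm, pow_mul, isPrimitiveRoot_ω7.pow_eq_one, one_pow]
  simp only [ramFactor, h, isPrimitiveRoot_ω7.pow_eq_one, mul_zero, pow_zero]

theorem ramFactor_zero :
    ramFactor 0 = 1 + X - C X * X ^ 2 - C (X ^ 3) * X ^ 5 := by
  simp [ramFactor]

theorem coeff_prod_ramFactor_eq_zero {n : ℕ} (hn : ¬ 7 ∣ n) :
    (∏ j ∈ range 7, ramFactor j).coeff n = 0 :=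
  coeff_eq_zero_of_comp_C_mul_X_eq_self (isPrimitiveRoot_ω7.map_of_injective C_injective)
    (prod_range_comp_eq_self ramFactor_comp_C_mul_X ramFactor_seven) hn

theorem prod_range_seven_ramFactor :
    ∏ j ∈ range 7, ramFactor j = (∏ j ∈ Icc 1 6, ramFactor j) * ramFactor 0 := by
  rw [prod_range_succ', ← Ico_add_one_right_eq_Icc, prod_Ico_eq_prod_range]
  simp [add_comm]

theorem ramC_natCast_sub (n k : ℕ) :
    ramC ((n : ℤ) - k) = ((∏ j ∈ Icc 1 6, ramFactor j) * X ^ k).coeff n := by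
  rw [ramC, coeff_mul_X_pow']
  split_ifs <;> first | rfl | omega | (congr 1; omega)

/-- The coefficients `c_n` satisfy the recurrence
`c_n + c_{n-1} - a c_{n-2} - a³ c_{n-5} = d_{n/7}` when `7 ∣ n`, and `= 0` otherwise. -/
theorem ramC_recurrence (n : ℕ) :
    ramC (n : ℤ) + ramC ((n : ℤ) - 1) - Polynomial.X * ramC ((n : ℤ) - 2)
        - Polynomial.X ^ 3 * ramC ((n : ℤ) - 5) =
      if 7 ∣ n then ramD (n / 7) else 0 := by
  have h0 := ramC_natCast_sub n 0
  have h1 := ramC_natCast_sub n 1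
  have h2 := ramC_natCast_sub n 2
  have h5 := ramC_natCast_sub n 5
  simp only [Nat.cast_zero, sub_zero, pow_zero, mul_one, Nat.cast_one, pow_one, Nat.cast_ofNat]
    at h0 h1 h2 h5
  have hlhs : ramC (n : ℤ) + ramC ((n : ℤ) - 1) - X * ramC ((n : ℤ) - 2)
      - X ^ 3 * ramC ((n : ℤ) - 5) = (∏ j ∈ range 7, ramFactor j).coeff n := by
    rw [h0, h1, h2, h5, prod_range_seven_ramFactor, ramFactor_zero]
    simp only [mul_add, mul_sub, mul_one, coeff_add, coeff_sub, mul_left_comm _ (C _),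
      coeff_C_mul]
  rw [hlhs]
  split_ifs with h
  · rw [ramD, Nat.mul_div_cancel' h]
  · exact coeff_prod_ramFactor_eq_zero h
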